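/- arXiv:1505.06182 — 5 statements merged into one kernel-verified Lean document; each statement's English description precedes it below -/
import Mathlib

section
/- Hermitian symmetry of the quaternion covariance matrix (pointwise identity): let μ1, μ2 be orthogonal pure unit quaternions and μ3 := μ1·μ2. Then for every q ∈ ℍ, (−μ1·q·μ1)·star(−μ2·q·μ2) = −μ1·(q·star(−μ3·q·μ3))·μ1, i.e. q^{μ1}·star(q^{μ2}) = (q·star(q^{μ3}))^{μ1}; consequently γ_{μ1 μ2} = (γ_{1 μ3})^{μ1} for any square-integrable quaternion random variable. -/
/-!
Pure quaternions `μ1`, `μ2` with pure product anticommute, so `μ1 μ2 μ1 = μ2` once `μ1² = -1`;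
with this, both sides of the pointwise identity expand to `μ1 q μ1 μ2 q̄ μ2`. The covariance
identity follows by integrating, since `q ↦ -μ1 q μ1` is continuous and linear and
`Q · star (Q^{μ3})` is integrable by Hölder.
-/

open Quaternion MeasureTheory

/-- Equip the quaternions with their Borel σ-algebra. -/
noncomputable instance : MeasurableSpace ℍ[ℝ] := borel ℍ[ℝ]
instance : BorelSpace ℍ[ℝ] := ⟨rfl⟩

/-- The paper's `q^μ`. -/
def involutionAlong {R : Type*} [Ring R] (μ q : R) : R := -μ * q * μ

section Algebraic

variable {R : Type*} [Ring R] [StarRing R]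

theorem star_involutionAlong_of_star_eq_neg {μ : R} (hμ : star μ = -μ) (q : R) :
    star (involutionAlong μ q) = involutionAlong μ (star q) := by
  simp only [involutionAlong, star_mul, star_neg, hμ]
  noncomm_ring

theorem mul_mul_self_eq_of_star_eq_neg {a b : R} (ha : star a = -a) (hb : star b = -b)
    (hab : star (a * b) = -(a * b)) (haa : a * a = -1) : a * b * a = b := by
  have hba : b * a = -(a * b) := by rwa [star_mul, ha, hb, neg_mul_neg] at hab
  rw [mul_assoc, hba, mul_neg, ← mul_assoc, haa, neg_one_mul, neg_neg]

theorem involutionAlong_mul_star_involutionAlong {a b : R} (ha : star a = -a)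
    (hb : star b = -b) (hab : star (a * b) = -(a * b)) (haa : a * a = -1) (q : R) :
    involutionAlong a q * star (involutionAlong b q)
      = involutionAlong a (q * star (involutionAlong (a * b) q)) := by
  rw [star_involutionAlong_of_star_eq_neg hb, star_involutionAlong_of_star_eq_neg hab]
  calc involutionAlong a q * involutionAlong b (star q)
      = a * (q * (a * b * (star q * b))) := by simp only [involutionAlong]; noncomm_ring
    _ = a * (q * (a * b * (star q * (a * b * a)))) := by
        rw [mul_mul_self_eq_of_star_eq_neg ha hb hab haa]
    _ = involutionAlong a (q * involutionAlong (a * b) (star q)) := by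
        simp only [involutionAlong]; noncomm_ring

end Algebraic

theorem Quaternion.mul_self_eq_neg_one {μ : ℍ[ℝ]} (hre : μ.re = 0) (hμ : ‖μ‖ = 1) :
    μ * μ = -1 := by
  rw [← sq, sq_eq_neg_normSq.2 hre, normSq_eq_norm_mul_self, hμ, mul_one, coe_one]

theorem integral_involutionAlong {Ω A : Type*} [MeasurableSpace Ω] {P : Measure Ω}
    [NormedRing A] [NormedAlgebra ℝ A] {f : Ω → A} (hf : Integrable f P) (μ : A) :
    ∫ ω, involutionAlong μ (f ω) ∂P = involutionAlong μ (∫ ω, f ω ∂P) := by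
  simp only [involutionAlong]
  rw [integral_mul_const_of_integrable (hf.const_mul _), integral_const_mul_of_integrable hf]

theorem covariance_hermitian_symmetry_general
    {Ω : Type*} [MeasurableSpace Ω] (P : Measure Ω)
    (μ1 μ2 : ℍ[ℝ]) (h1re : μ1.re = 0) (h1 : ‖μ1‖ = 1)
    (h2re : μ2.re = 0) (horth : (μ1 * μ2).re = 0)
    (μ3 : ℍ[ℝ]) (hμ3 : μ3 = μ1 * μ2)
    (Q : Ω → ℍ[ℝ]) (hQ : MemLp Q 2 P) :
    (∀ q : ℍ[ℝ],
      (-μ1 * q * μ1) * star (-μ2 * q * μ2) = -μ1 * (q * star (-μ3 * q * μ3)) * μ1) ∧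
    (∫ ω, (-μ1 * Q ω * μ1) * star (-μ2 * Q ω * μ2) ∂P)
        = -μ1 * (∫ ω, Q ω * star (-μ3 * Q ω * μ3) ∂P) * μ1 := by
  subst hμ3
  have key (q : ℍ[ℝ]) := involutionAlong_mul_star_involutionAlong (star_eq_neg.2 h1re)
    (star_eq_neg.2 h2re) (star_eq_neg.2 horth) (mul_self_eq_neg_one h1re h1) q
  have hint : Integrable (fun ω => Q ω * star (-(μ1 * μ2) * Q ω * (μ1 * μ2))) P :=
    hQ.integrable_mul ((hQ.const_mul _).mul_const _).star
  exact ⟨key, (integral_congr_ae (.of_forall fun ω => key (Q ω))).trans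
    (integral_involutionAlong hint μ1)⟩

/-- Hermitian symmetry of the quaternion covariance matrix: pointwise,
`q^{μ1}·star(q^{μ2}) = (q·star(q^{μ3}))^{μ1}` where `μ3 = μ1·μ2`, and hence
`γ_{μ1 μ2} = (γ_{1 μ3})^{μ1}` for any square-integrable quaternion random variable. -/
theorem covariance_hermitian_symmetry
    {Ω : Type*} [MeasurableSpace Ω] (P : Measure Ω) [IsProbabilityMeasure P]
    (μ1 μ2 : ℍ[ℝ]) (h1re : μ1.re = 0) (h1 : ‖μ1‖ = 1)
    (h2re : μ2.re = 0) (h2 : ‖μ2‖ = 1) (horth : (μ1 * μ2).re = 0)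
    (μ3 : ℍ[ℝ]) (hμ3 : μ3 = μ1 * μ2)
    (Q : Ω → ℍ[ℝ]) (hQmeas : Measurable Q) (hQ : MemLp Q 2 P) :
    (∀ q : ℍ[ℝ],
      (-μ1 * q * μ1) * star (-μ2 * q * μ2) = -μ1 * (q * star (-μ3 * q * μ3)) * μ1) ∧
    (∫ ω, (-μ1 * Q ω * μ1) * star (-μ2 * Q ω * μ2) ∂P)
        = -μ1 * (∫ ω, Q ω * star (-μ3 * Q ω * μ3) ∂P) * μ1 :=
  covariance_hermitian_symmetry_general P μ1 μ2 h1re h1 h2re horth μ3 hμ3 Q hQ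
end

section
/- Covariance symmetries of a (μ1, μ2)-proper variable: let μ1, μ2 be orthogonal pure unit quaternions, μ3 := μ1μ2, and let Q be a square-integrable quaternion random variable on a probability space (Ω, P) whose law is invariant under q ↦ μ1·q·μ2 (i.e. the law of ω ↦ μ1·Q(ω)·μ2 equals the law of Q). Define γ_ν := E[Q·star(−ν·Q·ν)] ∈ ℍ for ν ∈ {μ1, μ2, μ3} (Bochner integral). Then γ_{μ1} = −(γ_{μ1})^{μ1}, γ_{μ2} = −(γ_{μ2})^{μ1}, and γ_{μ3} = (γ_{μ3})^{μ1}; equivalently γ_{μ1} = μ1·γ_{μ1}·μ1, γ_{μ2} = μ1·γ_{μ2}·μ1, and γ_{μ3} = −μ1·γ_{μ3}·μ1. -/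
/-!
Since `q ↦ μ1 q μ2` preserves the law of `Q`, `γ_ν = E[f_ν(μ1 Q μ2)]` with
`f_ν q = q · star(-ν q ν)`. For pure `ν`, `f_ν q = -q ν q̄ ν`, so if `μ2 ν μ2 = a ν` and
`μ1 ν = b ν μ1` then `f_ν(μ1 q μ2) = ab · μ1 f_ν(q) μ1`. Orthogonal pure quaternions anticommute
and `μ2² = -1`, which gives `(a, b) = (1, 1), (-1, -1), (1, -1)` for `ν = μ1, μ2, μ1 μ2`. Pulling the linear map
`x ↦ ±μ1 x μ1` out of the integral yields the three identities.
-/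

open Quaternion MeasureTheory

namespace Quaternion

variable {R : Type*} [CommRing R]

/-- `q * star (q ^ ν)`, where `q ^ ν = -ν q ν` is the involution along `ν`; its expectation is
the covariance `γ_ν`. -/
def complementaryProduct (ν q : ℍ[R]) : ℍ[R] := q * star (-ν * q * ν)

section Conjugation

variable {μ1 μ2 ν : ℍ[R]} (h1 : star μ1 = -μ1) (h2 : star μ2 = -μ2)
include h1 h2

theorem complementaryProduct_mul_mul (hν : star ν = -ν) {a b : R}
    (ha : μ2 * ν * μ2 = a • ν) (hb : μ1 * ν = b • (ν * μ1)) (q : ℍ[R]) :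
    complementaryProduct ν (μ1 * q * μ2) = (a * b) • (μ1 * complementaryProduct ν q * μ1) := by
  calc complementaryProduct ν (μ1 * q * μ2)
      = -(μ1 * q * (μ2 * ν * μ2) * star q * (μ1 * ν)) := by
        simp only [complementaryProduct, star_mul, star_neg, h1, h2, hν, neg_mul, mul_neg,
          neg_neg, mul_assoc]
    _ = -((a * b) • (μ1 * q * ν * star q * ν * μ1)) := by
        rw [ha, hb]
        simp only [smul_mul_assoc, mul_smul_comm, smul_smul, mul_assoc, mul_comm b a]
    _ = (a * b) • (μ1 * complementaryProduct ν q * μ1) := by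
        simp only [complementaryProduct, star_mul, star_neg, hν, neg_mul, mul_neg, neg_neg,
          mul_assoc, smul_neg]

variable (h12 : star (μ1 * μ2) = -(μ1 * μ2))
include h12

theorem anticommute_of_star_eq_neg : μ2 * μ1 = -(μ1 * μ2) := by
  rwa [star_mul, h1, h2, neg_mul_neg] at h12

variable (hsq : μ2 * μ2 = -1)
include hsq

theorem complementaryProduct_left_mul_mul (q : ℍ[R]) :
    complementaryProduct μ1 (μ1 * q * μ2) = μ1 * complementaryProduct μ1 q * μ1 := by
  have ha : μ2 * μ1 * μ2 = (1 : R) • μ1 := by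
    rw [anticommute_of_star_eq_neg h1 h2 h12, neg_mul, mul_assoc, hsq]
    simp
  simpa using complementaryProduct_mul_mul h1 h2 h1 ha (one_smul R (μ1 * μ1)).symm q

theorem complementaryProduct_right_mul_mul (q : ℍ[R]) :
    complementaryProduct μ2 (μ1 * q * μ2) = μ1 * complementaryProduct μ2 q * μ1 := by
  have ha : μ2 * μ2 * μ2 = (-1 : R) • μ2 := by simp [hsq]
  have hb : μ1 * μ2 = (-1 : R) • (μ2 * μ1) := by
    simp [anticommute_of_star_eq_neg h1 h2 h12]
  simpa using complementaryProduct_mul_mul h1 h2 h2 ha hb q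

theorem complementaryProduct_mul_mul_mul (q : ℍ[R]) :
    complementaryProduct (μ1 * μ2) (μ1 * q * μ2) =
      -(μ1 * complementaryProduct (μ1 * μ2) q * μ1) := by
  have hanti := anticommute_of_star_eq_neg h1 h2 h12
  have ha : μ2 * (μ1 * μ2) * μ2 = (1 : R) • (μ1 * μ2) := by
    rw [mul_assoc, mul_assoc, hsq, ← mul_assoc, hanti]
    simp
  have hb : μ1 * (μ1 * μ2) = (-1 : R) • (μ1 * μ2 * μ1) := by
    rw [mul_assoc μ1 μ2, hanti]
    simp
  simpa using complementaryProduct_mul_mul h1 h2 h12 ha hb q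

end Conjugation

theorem norm_complementaryProduct (ν q : ℍ[ℝ]) :
    ‖complementaryProduct ν q‖ = ‖ν‖ ^ 2 * ‖q‖ ^ 2 := by
  simp only [complementaryProduct, norm_mul, norm_star, norm_neg]
  ring

theorem continuous_complementaryProduct (ν : ℍ[ℝ]) : Continuous (complementaryProduct ν) := by
  unfold complementaryProduct
  fun_prop

end Quaternion

theorem ProbabilityTheory.IdentDistrib.integral_comp_eq_map_integral
    {Ω E F : Type*} [MeasurableSpace Ω] {P : Measure Ω} [MeasurableSpace E]
    [NormedAddCommGroup F] [NormedSpace ℝ F] [CompleteSpace F] [MeasurableSpace F] [BorelSpace F]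
    {X : Ω → E} {g : E → E} (hX : IdentDistrib (fun ω => g (X ω)) X P P)
    {Φ : E → F} (hΦ : Measurable Φ) (L : F →L[ℝ] F) (hΦg : ∀ x, Φ (g x) = L (Φ x))
    (hint : Integrable (fun ω => Φ (X ω)) P) :
    ∫ ω, Φ (X ω) ∂P = L (∫ ω, Φ (X ω) ∂P) :=
  calc ∫ ω, Φ (X ω) ∂P
      = ∫ ω, Φ (g (X ω)) ∂P := (hX.comp hΦ).integral_eq.symm
    _ = ∫ ω, L (Φ (X ω)) ∂P := by simp only [hΦg]
    _ = L (∫ ω, Φ (X ω) ∂P) := L.integral_comp_comm hint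

theorem MeasureTheory.MemLp.integrable_complementaryProduct {Ω : Type*}
    [MeasurableSpace Ω] {P : Measure Ω} {Q : Ω → ℍ[ℝ]} (hQ : MemLp Q 2 P) (ν : ℍ[ℝ]) :
    Integrable (fun ω => complementaryProduct ν (Q ω)) P := by
  have hsq : Integrable (fun ω => ‖Q ω‖ ^ 2) P :=
    (memLp_two_iff_integrable_sq_norm hQ.aestronglyMeasurable).mp hQ
  refine (hsq.const_mul (‖ν‖ ^ 2)).congr' ?_ (ae_of_all _ fun ω => ?_)
  · exact (continuous_complementaryProduct ν).comp_aestronglyMeasurable hQ.aestronglyMeasurable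
  · simp [norm_complementaryProduct]

theorem covariance_symmetries_of_mu1_mu2_proper_general
    {Ω : Type*} [MeasurableSpace Ω] (P : Measure Ω)
    (μ1 μ2 : ℍ[ℝ]) (h1re : μ1.re = 0)
    (h2re : μ2.re = 0) (h2 : ‖μ2‖ = 1) (horth : (μ1 * μ2).re = 0)
    (μ3 : ℍ[ℝ]) (hμ3 : μ3 = μ1 * μ2)
    (Q : Ω → ℍ[ℝ]) (hQ : MemLp Q 2 P)
    (hprop : Measure.map (fun ω => μ1 * Q ω * μ2) P = Measure.map Q P)
    (γ : ℍ[ℝ] → ℍ[ℝ]) (hγ : ∀ ν : ℍ[ℝ], γ ν = ∫ ω, Q ω * star (-ν * Q ω * ν) ∂P) :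
    γ μ1 = μ1 * γ μ1 * μ1 ∧
    γ μ2 = μ1 * γ μ2 * μ1 ∧
    γ μ3 = -(μ1 * γ μ3 * μ1) := by
  subst hμ3
  have hs1 : star μ1 = -μ1 := star_eq_neg.mpr h1re
  have hs2 : star μ2 = -μ2 := star_eq_neg.mpr h2re
  have hs12 : star (μ1 * μ2) = -(μ1 * μ2) := star_eq_neg.mpr horth
  have hsq : μ2 * μ2 = -1 := by
    rw [← sq, sq_eq_neg_normSq.mpr h2re, normSq_eq_norm_mul_self, h2, mul_one, coe_one]
  have hQm : AEMeasurable Q P := hQ.aestronglyMeasurable.aemeasurable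
  have hX : ProbabilityTheory.IdentDistrib (fun ω => μ1 * Q ω * μ2) Q P P :=
    ⟨by fun_prop, hQm, hprop⟩
  have hfixed (ν : ℍ[ℝ]) (L : ℍ[ℝ] →L[ℝ] ℍ[ℝ])
      (hL : ∀ q, complementaryProduct ν (μ1 * q * μ2) = L (complementaryProduct ν q)) :
      γ ν = L (γ ν) := by
    rw [hγ]
    exact hX.integral_comp_eq_map_integral
      (continuous_complementaryProduct ν).measurable L hL (hQ.integrable_complementaryProduct ν)
  let M := ContinuousLinearMap.mulLeftRight ℝ ℍ[ℝ] μ1 μ1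
  exact ⟨hfixed μ1 M (complementaryProduct_left_mul_mul hs1 hs2 hs12 hsq),
    hfixed μ2 M (complementaryProduct_right_mul_mul hs1 hs2 hs12 hsq),
    hfixed (μ1 * μ2) (-M) (complementaryProduct_mul_mul_mul hs1 hs2 hs12 hsq)⟩

/-- Covariance symmetries of a `(μ1, μ2)`-proper quaternion random variable:
with `γ_ν = E[Q·star(−ν·Q·ν)]`, one has `γ_{μ1} = −(γ_{μ1})^{μ1} = μ1·γ_{μ1}·μ1`,
`γ_{μ2} = −(γ_{μ2})^{μ1} = μ1·γ_{μ2}·μ1` and `γ_{μ3} = (γ_{μ3})^{μ1} = −μ1·γ_{μ3}·μ1`. -/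
theorem covariance_symmetries_of_mu1_mu2_proper
    {Ω : Type*} [MeasurableSpace Ω] (P : Measure Ω) [IsProbabilityMeasure P]
    (μ1 μ2 : ℍ[ℝ]) (h1re : μ1.re = 0) (h1 : ‖μ1‖ = 1)
    (h2re : μ2.re = 0) (h2 : ‖μ2‖ = 1) (horth : (μ1 * μ2).re = 0)
    (μ3 : ℍ[ℝ]) (hμ3 : μ3 = μ1 * μ2)
    (Q : Ω → ℍ[ℝ]) (hQmeas : Measurable Q) (hQ : MemLp Q 2 P)
    (hprop : Measure.map (fun ω => μ1 * Q ω * μ2) P = Measure.map Q P)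
    (γ : ℍ[ℝ] → ℍ[ℝ]) (hγ : ∀ ν : ℍ[ℝ], γ ν = ∫ ω, Q ω * star (-ν * Q ω * ν) ∂P) :
    γ μ1 = μ1 * γ μ1 * μ1 ∧
    γ μ2 = μ1 * γ μ2 * μ1 ∧
    γ μ3 = -(μ1 * γ μ3 * μ1) :=
  covariance_symmetries_of_mu1_mu2_proper_general P μ1 μ2 h1re h2re h2 horth μ3 hμ3 Q hQ hprop γ hγ
end

section
/- Second-order structure of a (μ1, μ2)-proper variable: let μ1, μ2 be orthogonal pure unit quaternions, and let Q be a square-integrable quaternion random variable on (Ω, P) whose law is invariant under q ↦ μ1·q·μ2. Let Z1 := (Q − μ1·Q·μ1)/2 and Z2 := −((Q + μ1·Q·μ1)/2)·μ2 be its Cayley–Dickson components, taking values in ℂ_{μ1} = span_ℝ{1, μ1}. Then: (i) E[|Z1|²] = E[|Z2|²]; (ii) E[Z1²] = −E[Z2²]; (iii) the cross-correlation E[Z1·star(Z2)] has vanishing real part, Re(E[Z1·star(Z2)]) = 0. -/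
open Quaternion MeasureTheory ProbabilityTheory

/-!
The map `T q = μ1 * q * μ2` acts on the Cayley–Dickson components as
`(z1, z2) ↦ (-μ1 * z2, μ1 * z1)`. As `z1, z2 ∈ ℂ_{μ1}` commute with `μ1` and `μ1² = -1`, it follows
that `|T z1| = |z2|`, `(T z1)² = -z2²` and `T z1 * star (T z2) = -star (z1 * star z2)`. Invariance of
the law of `Q` under `T` turns these into identities of expectations; the last one says that
`C = E[Z1 * star Z2]` satisfies `C = -star C`, so `Re C = 0`.
-/

theorem integral_star {Ω A : Type*} [MeasurableSpace Ω] {P : Measure Ω}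
    [NormedAddCommGroup A] [NormedSpace ℝ A] [StarAddMonoid A] [ContinuousStar A]
    [StarModule ℝ A] (f : Ω → A) :
    ∫ ω, star (f ω) ∂P = star (∫ ω, f ω ∂P) :=
  (starL' ℝ : A ≃L[ℝ] A).integral_comp_comm f

theorem ProbabilityTheory.IdentDistrib.integral_comp {α β γ E : Type*} [MeasurableSpace α]
    [MeasurableSpace β] [MeasurableSpace γ] [NormedAddCommGroup E] [NormedSpace ℝ E]
    [MeasurableSpace E] [BorelSpace E] {μ : Measure α} {ν : Measure β} {f : α → γ} {g : β → γ}
    (h : IdentDistrib f g μ ν) {u : γ → E} (hu : Measurable u) :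
    ∫ x, u (f x) ∂μ = ∫ x, u (g x) ∂ν :=
  (h.comp hu).integral_eq

namespace Quaternion

instance : StarModule ℝ ℍ[ℝ] := ⟨fun r x => star_smul r x⟩

theorem div_two_eq_smul (x : ℍ[ℝ]) : x / 2 = (2⁻¹ : ℝ) • x := by
  rw [div_eq_mul_inv, ← mul_coe_eq_smul]; push_cast; rfl

theorem mul_self_eq_neg_one_of_re_eq_zero {μ : ℍ[ℝ]} (hre : μ.re = 0) (hμ : ‖μ‖ = 1) :
    μ * μ = -1 := by
  rw [← sq, sq_eq_neg_normSq.mpr hre, normSq_eq_norm_mul_self, hμ]; norm_num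

theorem mul_comm_eq_neg_of_re_mul_eq_zero {μ1 μ2 : ℍ[ℝ]} (h1 : μ1.re = 0) (h2 : μ2.re = 0)
    (horth : (μ1 * μ2).re = 0) : μ2 * μ1 = -(μ1 * μ2) := by
  rw [← star_eq_neg.mpr horth, star_mul, star_eq_neg.mpr h1, star_eq_neg.mpr h2, neg_mul_neg]

end Quaternion

section Ring

variable {R : Type*} [Ring R] {μ : R}

theorem mul_mul_cancel_left_of_mul_self_eq_neg_one (h : μ * μ = -1) (x : R) :
    μ * (μ * x) = -x := by
  rw [← mul_assoc, h, neg_one_mul]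

theorem neg_mul_sq_of_commute (h : μ * μ = -1) {x : R} (hx : Commute μ x) :
    (-(μ * x)) ^ 2 = -(x ^ 2) := by
  rw [neg_sq, sq, mul_assoc, ← mul_assoc x, ← hx.eq, mul_assoc, ← mul_assoc, h, neg_one_mul, sq]

theorem neg_mul_mul_star_of_commute [StarRing R] {x y : R} (h : μ * μ = -1)
    (hstar : star μ = -μ) (hx : Commute μ x) (hy : Commute μ y) :
    -(μ * y) * star (μ * x) = -star (x * star y) := by
  have hx' : Commute μ (star x) := by simpa [hstar] using hx.star_star
  rw [star_mul, star_mul, star_star, hstar, hy.eq, mul_neg, ← hx'.eq]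
  calc -(y * μ) * -(μ * star x) = y * (μ * μ) * star x := by noncomm_ring
    _ = -(y * star x) := by rw [h]; noncomm_ring

end Ring

/-- The Cayley–Dickson components: `q = cdFst μ1 q + cdSnd μ1 μ2 q * μ2` when `μ2 * μ2 = -1`. -/
noncomputable def cdFst (μ1 q : ℍ[ℝ]) : ℍ[ℝ] := (q - μ1 * q * μ1) / 2

noncomputable def cdSnd (μ1 μ2 q : ℍ[ℝ]) : ℍ[ℝ] := -((q + μ1 * q * μ1) / 2) * μ2

@[fun_prop]
theorem continuous_cdFst (μ1 : ℍ[ℝ]) : Continuous (cdFst μ1) := by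
  unfold cdFst; fun_prop

@[fun_prop]
theorem continuous_cdSnd (μ1 μ2 : ℍ[ℝ]) : Continuous (cdSnd μ1 μ2) := by
  unfold cdSnd; fun_prop

section CayleyDickson

variable {μ1 μ2 : ℍ[ℝ]}

theorem commute_cdFst (h1 : μ1 * μ1 = -1) (q : ℍ[ℝ]) : Commute μ1 (cdFst μ1 q) := by
  simp only [Commute, SemiconjBy, cdFst, div_two_eq_smul, mul_smul_comm, smul_mul_assoc, mul_sub,
    sub_mul, mul_assoc, h1, mul_mul_cancel_left_of_mul_self_eq_neg_one h1, mul_neg, mul_one]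
  module

theorem commute_cdSnd (h1 : μ1 * μ1 = -1) (h : μ2 * μ1 = -(μ1 * μ2)) (q : ℍ[ℝ]) :
    Commute μ1 (cdSnd μ1 μ2 q) := by
  simp only [Commute, SemiconjBy, cdSnd, div_two_eq_smul, mul_smul_comm, smul_mul_assoc,
    ← smul_neg, mul_add, add_mul, neg_mul, mul_neg, mul_assoc, h,
    mul_mul_cancel_left_of_mul_self_eq_neg_one h1, neg_neg]
  module

theorem cdFst_mul_mul (h1 : μ1 * μ1 = -1) (h : μ2 * μ1 = -(μ1 * μ2)) (q : ℍ[ℝ]) :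
    cdFst μ1 (μ1 * q * μ2) = -(μ1 * cdSnd μ1 μ2 q) := by
  simp only [cdFst, cdSnd, div_two_eq_smul, mul_smul_comm, smul_mul_assoc, ← smul_neg, mul_add,
    add_mul, neg_mul, mul_neg, mul_assoc, h, mul_mul_cancel_left_of_mul_self_eq_neg_one h1,
    neg_neg]
  module

theorem cdSnd_mul_mul (h1 : μ1 * μ1 = -1) (h2 : μ2 * μ2 = -1) (h : μ2 * μ1 = -(μ1 * μ2))
    (q : ℍ[ℝ]) : cdSnd μ1 μ2 (μ1 * q * μ2) = μ1 * cdFst μ1 q := by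
  simp only [cdFst, cdSnd, div_two_eq_smul, mul_smul_comm, smul_mul_assoc, ← smul_neg,
    add_mul, mul_sub, neg_mul, mul_neg, mul_assoc, h2, h,
    mul_mul_cancel_left_of_mul_self_eq_neg_one h1, neg_neg, mul_one]
  module

end CayleyDickson

section LawInvariance

variable {Ω : Type*} [MeasurableSpace Ω] {P : Measure Ω} {Q : Ω → ℍ[ℝ]} {μ1 μ2 : ℍ[ℝ]}

theorem integral_norm_cdFst_sq_eq (hT : IdentDistrib (fun ω => μ1 * Q ω * μ2) Q P P)
    (hμ1 : ‖μ1‖ = 1) (h1 : μ1 * μ1 = -1) (h : μ2 * μ1 = -(μ1 * μ2)) :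
    ∫ ω, ‖cdFst μ1 (Q ω)‖ ^ 2 ∂P = ∫ ω, ‖cdSnd μ1 μ2 (Q ω)‖ ^ 2 ∂P := by
  rw [← hT.integral_comp (u := fun q => ‖cdFst μ1 q‖ ^ 2) (by fun_prop)]
  simp only [cdFst_mul_mul h1 h, norm_neg, norm_mul, hμ1, one_mul]

theorem integral_cdFst_sq_eq_neg (hT : IdentDistrib (fun ω => μ1 * Q ω * μ2) Q P P)
    (h1 : μ1 * μ1 = -1) (h : μ2 * μ1 = -(μ1 * μ2)) :
    ∫ ω, cdFst μ1 (Q ω) ^ 2 ∂P = -∫ ω, cdSnd μ1 μ2 (Q ω) ^ 2 ∂P := by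
  rw [← hT.integral_comp (u := fun q => cdFst μ1 q ^ 2) (by fun_prop), ← integral_neg]
  simp only [cdFst_mul_mul h1 h, neg_mul_sq_of_commute h1 (commute_cdSnd h1 h _)]

theorem re_integral_cdFst_mul_star_cdSnd (hT : IdentDistrib (fun ω => μ1 * Q ω * μ2) Q P P)
    (hstar : star μ1 = -μ1) (h1 : μ1 * μ1 = -1) (h2 : μ2 * μ2 = -1) (h : μ2 * μ1 = -(μ1 * μ2)) :
    (∫ ω, cdFst μ1 (Q ω) * star (cdSnd μ1 μ2 (Q ω)) ∂P).re = 0 := by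
  set C := ∫ ω, cdFst μ1 (Q ω) * star (cdSnd μ1 μ2 (Q ω)) ∂P
  have hC : C = -star C := calc
    C = ∫ ω, cdFst μ1 (μ1 * Q ω * μ2) * star (cdSnd μ1 μ2 (μ1 * Q ω * μ2)) ∂P :=
      (hT.integral_comp (u := fun q => cdFst μ1 q * star (cdSnd μ1 μ2 q)) (by fun_prop)).symm
    _ = ∫ ω, -star (cdFst μ1 (Q ω) * star (cdSnd μ1 μ2 (Q ω))) ∂P := by
      simp only [cdFst_mul_mul h1 h, cdSnd_mul_mul h1 h2 h, neg_mul_mul_star_of_commute h1 hstar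
        (commute_cdFst h1 _) (commute_cdSnd h1 h _)]
    _ = -star C := by rw [integral_neg, integral_star]
  have hre := congrArg QuaternionAlgebra.re hC
  rw [re_neg, re_star] at hre
  linarith

end LawInvariance

theorem second_order_structure_mu1_mu2_proper_general
    {Ω : Type*} [MeasurableSpace Ω] (P : Measure Ω)
    (μ1 μ2 : ℍ[ℝ]) (h1re : μ1.re = 0) (h1 : ‖μ1‖ = 1)
    (h2re : μ2.re = 0) (h2 : ‖μ2‖ = 1) (horth : (μ1 * μ2).re = 0)
    (Q : Ω → ℍ[ℝ]) (hQmeas : Measurable Q)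
    (hprop : Measure.map (fun ω => μ1 * Q ω * μ2) P = Measure.map Q P)
    (Z1 Z2 : Ω → ℍ[ℝ])
    (hZ1 : ∀ ω, Z1 ω = (Q ω - μ1 * Q ω * μ1) / 2)
    (hZ2 : ∀ ω, Z2 ω = -((Q ω + μ1 * Q ω * μ1) / 2) * μ2) :
    (∫ ω, ‖Z1 ω‖ ^ 2 ∂P) = (∫ ω, ‖Z2 ω‖ ^ 2 ∂P) ∧
    (∫ ω, Z1 ω ^ 2 ∂P) = -(∫ ω, Z2 ω ^ 2 ∂P) ∧
    (∫ ω, Z1 ω * star (Z2 ω) ∂P).re = 0 := by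
  have hμ1 := mul_self_eq_neg_one_of_re_eq_zero h1re h1
  have hμ2 := mul_self_eq_neg_one_of_re_eq_zero h2re h2
  have hanti := mul_comm_eq_neg_of_re_mul_eq_zero h1re h2re horth
  have hT : IdentDistrib (fun ω => μ1 * Q ω * μ2) Q P P :=
    ⟨by fun_prop, hQmeas.aemeasurable, hprop⟩
  obtain rfl : Z1 = fun ω => cdFst μ1 (Q ω) := funext hZ1
  obtain rfl : Z2 = fun ω => cdSnd μ1 μ2 (Q ω) := funext hZ2
  exact ⟨integral_norm_cdFst_sq_eq hT h1 hμ1 hanti, integral_cdFst_sq_eq_neg hT hμ1 hanti,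
    re_integral_cdFst_mul_star_cdSnd hT (star_eq_neg.mpr h1re) hμ1 hμ2 hanti⟩

/-- Second-order structure of a `(μ1, μ2)`-proper quaternion random variable:
its Cayley–Dickson components satisfy `E[|Z1|²] = E[|Z2|²]`, `E[Z1²] = −E[Z2²]`,
and `Re(E[Z1·star(Z2)]) = 0`. -/
theorem second_order_structure_mu1_mu2_proper
    {Ω : Type*} [MeasurableSpace Ω] (P : Measure Ω) [IsProbabilityMeasure P]
    (μ1 μ2 : ℍ[ℝ]) (h1re : μ1.re = 0) (h1 : ‖μ1‖ = 1)
    (h2re : μ2.re = 0) (h2 : ‖μ2‖ = 1) (horth : (μ1 * μ2).re = 0)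
    (Q : Ω → ℍ[ℝ]) (hQmeas : Measurable Q) (hQ : MemLp Q 2 P)
    (hprop : Measure.map (fun ω => μ1 * Q ω * μ2) P = Measure.map Q P)
    (Z1 Z2 : Ω → ℍ[ℝ])
    (hZ1 : ∀ ω, Z1 ω = (Q ω - μ1 * Q ω * μ1) / 2)
    (hZ2 : ∀ ω, Z2 ω = -((Q ω + μ1 * Q ω * μ1) / 2) * μ2) :
    (∫ ω, ‖Z1 ω‖ ^ 2 ∂P) = (∫ ω, ‖Z2 ω‖ ^ 2 ∂P) ∧
    (∫ ω, Z1 ω ^ 2 ∂P) = -(∫ ω, Z2 ω ^ 2 ∂P) ∧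
    (∫ ω, Z1 ω * star (Z2 ω) ∂P).re = 0 :=
  second_order_structure_mu1_mu2_proper_general P μ1 μ2 h1re h1 h2re h2 horth Q hQmeas hprop Z1 Z2
    hZ1 hZ2
end

section
/- Second-order structure of a (μ1, 1)-proper variable: let μ1, μ2 be orthogonal pure unit quaternions, and let Q be a square-integrable quaternion random variable on (Ω, P) whose law is invariant under left Clifford translation q ↦ μ1·q (i.e. the law of ω ↦ μ1·Q(ω) equals the law of Q). Let Z1 := (Q − μ1·Q·μ1)/2 and Z2 := −((Q + μ1·Q·μ1)/2)·μ2 be its Cayley–Dickson components, taking values in ℂ_{μ1} = span_ℝ{1, μ1}. Then Z1 and Z2 are proper complex variables that are not pseudo-correlated: E[Z1²] = 0, E[Z2²] = 0, and E[Z1·Z2] = 0. -/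
/-! Translating `Q` to `μ1 * Q` multiplies both Cayley–Dickson components on the left by `μ1`,
and `μ1` commutes with both of them (for `Z2` because `Q + μ1 Q μ1` and `μ2` each anticommute
with `μ1`). Hence every product `Zi * Zj` is odd under the translation:
`μ1 Zi μ1 Zj = μ1² Zi Zj = -Zi Zj`. As `μ1 * Q` and `Q` have the same law, the expectation of
an odd function of `Q` equals its own negative, so it vanishes. -/

open Quaternion MeasureTheory

open ProbabilityTheory

theorem ProbabilityTheory.IdentDistrib.integral_eq_zero_of_comp_eq_neg
    {α γ F : Type*} [MeasurableSpace α] [MeasurableSpace γ]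
    [NormedAddCommGroup F] [NormedSpace ℝ F] [MeasurableSpace F] [BorelSpace F]
    {P : Measure α} {f : γ → γ} {X : α → γ} (hX : IdentDistrib (fun a => f (X a)) X P P)
    {g : γ → F} (hg : Measurable g) (hodd : ∀ x, g (f x) = -g x) :
    ∫ a, g (X a) ∂P = 0 := by
  have h := (hX.comp hg).integral_eq
  simp only [Function.comp_def, hodd, integral_neg] at h
  have := IsAddTorsionFree.of_isTorsionFree ℝ F
  exact self_eq_neg.mp h.symm

section CayleyDickson

variable {R : Type*} [DivisionRing R]

def cayleyDicksonFst (μ q : R) : R := (q - μ * q * μ) / 2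

def cayleyDicksonSnd (μ ν q : R) : R := -((q + μ * q * μ) / 2) * ν

theorem cayleyDicksonFst_mul_left (μ q : R) :
    cayleyDicksonFst μ (μ * q) = μ * cayleyDicksonFst μ q := by
  rw [cayleyDicksonFst, cayleyDicksonFst, ← mul_div_assoc]
  noncomm_ring

theorem cayleyDicksonSnd_mul_left (μ ν q : R) :
    cayleyDicksonSnd μ ν (μ * q) = μ * cayleyDicksonSnd μ ν q := by
  rw [cayleyDicksonSnd, cayleyDicksonSnd, ← mul_assoc μ (-_), mul_neg, ← mul_div_assoc]
  noncomm_ring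

variable {μ : R}

theorem commute_cayleyDicksonFst (hμ : μ * μ = -1) (q : R) :
    Commute μ (cayleyDicksonFst μ q) := by
  refine Commute.div_right ?_ (Commute.ofNat_right μ 2)
  calc μ * (q - μ * q * μ) = μ * q - (μ * μ) * q * μ := by noncomm_ring
    _ = q * μ - μ * q * (μ * μ) := by rw [hμ]; noncomm_ring
    _ = (q - μ * q * μ) * μ := by noncomm_ring

theorem commute_cayleyDicksonSnd {ν : R} (hμ : μ * μ = -1) (hν : ν * μ = -(μ * ν)) (q : R) :
    Commute μ (cayleyDicksonSnd μ ν q) := by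
  have hx : SemiconjBy μ (q + μ * q * μ) (-(q + μ * q * μ)) :=
    calc μ * (q + μ * q * μ) = μ * q + (μ * μ) * q * μ := by noncomm_ring
      _ = -(q * μ + μ * q * (μ * μ)) := by rw [hμ]; noncomm_ring
      _ = -(q + μ * q * μ) * μ := by noncomm_ring
  have hν' : SemiconjBy μ ν (-ν) := by rw [SemiconjBy, neg_mul, hν, neg_neg]
  have := ((hx.div_right (Commute.ofNat_right μ 2)).neg_right).mul_right hν'
  rwa [neg_div, neg_neg, mul_neg, ← neg_mul] at this

end CayleyDickson

section Continuity

variable {R : Type*} [DivisionRing R] [TopologicalSpace R] [IsTopologicalRing R]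

theorem continuous_cayleyDicksonFst (μ : R) : Continuous (cayleyDicksonFst μ) := by
  unfold cayleyDicksonFst; fun_prop

theorem continuous_cayleyDicksonSnd (μ ν : R) : Continuous (cayleyDicksonSnd μ ν) := by
  unfold cayleyDicksonSnd; fun_prop

end Continuity

theorem Commute.mul_mul_mul_eq_neg {R : Type*} [Ring R] {μ a : R} (ha : Commute μ a)
    (hμ : μ * μ = -1) (b : R) : μ * a * (μ * b) = -(a * b) := by
  rw [mul_assoc, ← mul_assoc a, ← ha.eq, ← mul_assoc, ← mul_assoc, hμ, neg_one_mul, neg_mul]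

theorem integral_mul_eq_zero_of_identDistrib_mul_left
    {Ω R : Type*} [MeasurableSpace Ω] {P : Measure Ω}
    [NormedRing R] [NormedSpace ℝ R] [MeasurableSpace R] [BorelSpace R]
    {μ : R} (hμ : μ * μ = -1) {X : Ω → R} (hX : IdentDistrib (fun ω => μ * X ω) X P P)
    {z w : R → R} (hz : Continuous z) (hw : Continuous w)
    (hzμ : ∀ q, z (μ * q) = μ * z q) (hwμ : ∀ q, w (μ * q) = μ * w q)
    (hcomm : ∀ q, Commute μ (z q)) :
    ∫ ω, z (X ω) * w (X ω) ∂P = 0 :=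
  hX.integral_eq_zero_of_comp_eq_neg (g := fun q => z q * w q) (hz.mul hw).measurable
    fun q => by rw [hzμ, hwμ, (hcomm q).mul_mul_mul_eq_neg hμ]

namespace Quaternion

theorem mul_self_eq_neg_one_s16 {μ : ℍ[ℝ]} (hre : μ.re = 0) (hnorm : ‖μ‖ = 1) : μ * μ = -1 := by
  rw [← sq, sq_eq_neg_normSq.mpr hre, normSq_eq_norm_mul_self, hnorm, mul_one, coe_one]

theorem mul_comm_eq_neg {a b : ℍ[ℝ]} (ha : a.re = 0) (hb : b.re = 0) (hab : (a * b).re = 0) :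
    b * a = -(a * b) := by
  ext <;> simp only [re_mul, imI_mul, imJ_mul, imK_mul, re_neg, imI_neg, imJ_neg, imK_neg, ha,
    hb] at hab ⊢ <;> linarith

end Quaternion

theorem second_order_structure_mu1_one_proper_general
    {Ω : Type*} [MeasurableSpace Ω] (P : Measure Ω)
    (μ1 μ2 : ℍ[ℝ]) (h1re : μ1.re = 0) (h1 : ‖μ1‖ = 1)
    (h2re : μ2.re = 0) (horth : (μ1 * μ2).re = 0)
    (Q : Ω → ℍ[ℝ]) (hQmeas : Measurable Q)
    (hprop : Measure.map (fun ω => μ1 * Q ω) P = Measure.map Q P)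
    (Z1 Z2 : Ω → ℍ[ℝ])
    (hZ1 : ∀ ω, Z1 ω = (Q ω - μ1 * Q ω * μ1) / 2)
    (hZ2 : ∀ ω, Z2 ω = -((Q ω + μ1 * Q ω * μ1) / 2) * μ2) :
    (∫ ω, Z1 ω ^ 2 ∂P) = 0 ∧
    (∫ ω, Z2 ω ^ 2 ∂P) = 0 ∧
    (∫ ω, Z1 ω * Z2 ω ∂P) = 0 := by
  have hμ1 : μ1 * μ1 = -1 := mul_self_eq_neg_one_s16 h1re h1
  have hanti : μ2 * μ1 = -(μ1 * μ2) := mul_comm_eq_neg h1re h2re horth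
  have hX : IdentDistrib (fun ω => μ1 * Q ω) Q P P :=
    ⟨(hQmeas.const_mul μ1).aemeasurable, hQmeas.aemeasurable, hprop⟩
  obtain rfl : Z1 = fun ω => cayleyDicksonFst μ1 (Q ω) := funext hZ1
  obtain rfl : Z2 = fun ω => cayleyDicksonSnd μ1 μ2 (Q ω) := funext hZ2
  have hc1 := continuous_cayleyDicksonFst μ1
  have hc2 := continuous_cayleyDicksonSnd μ1 μ2
  have he1 := cayleyDicksonFst_mul_left μ1
  have he2 := cayleyDicksonSnd_mul_left μ1 μ2
  have hcomm1 := commute_cayleyDicksonFst hμ1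
  have hcomm2 := commute_cayleyDicksonSnd hμ1 hanti
  simp only [sq]
  exact ⟨integral_mul_eq_zero_of_identDistrib_mul_left hμ1 hX hc1 hc1 he1 he1 hcomm1,
    integral_mul_eq_zero_of_identDistrib_mul_left hμ1 hX hc2 hc2 he2 he2 hcomm2,
    integral_mul_eq_zero_of_identDistrib_mul_left hμ1 hX hc1 hc2 he1 he2 hcomm1⟩

/-- Second-order structure of a `(μ1, 1)`-proper quaternion random variable
(invariant under the left Clifford translation `q ↦ μ1·q`): its Cayley–Dickson
components are proper and not pseudo-correlated:
`E[Z1²] = 0`, `E[Z2²] = 0` and `E[Z1·Z2] = 0`. -/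
theorem second_order_structure_mu1_one_proper
    {Ω : Type*} [MeasurableSpace Ω] (P : Measure Ω) [IsProbabilityMeasure P]
    (μ1 μ2 : ℍ[ℝ]) (h1re : μ1.re = 0) (h1 : ‖μ1‖ = 1)
    (h2re : μ2.re = 0) (h2 : ‖μ2‖ = 1) (horth : (μ1 * μ2).re = 0)
    (Q : Ω → ℍ[ℝ]) (hQmeas : Measurable Q) (hQ : MemLp Q 2 P)
    (hprop : Measure.map (fun ω => μ1 * Q ω) P = Measure.map Q P)
    (Z1 Z2 : Ω → ℍ[ℝ])
    (hZ1 : ∀ ω, Z1 ω = (Q ω - μ1 * Q ω * μ1) / 2)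
    (hZ2 : ∀ ω, Z2 ω = -((Q ω + μ1 * Q ω * μ1) / 2) * μ2) :
    (∫ ω, Z1 ω ^ 2 ∂P) = 0 ∧
    (∫ ω, Z2 ω ^ 2 ∂P) = 0 ∧
    (∫ ω, Z1 ω * Z2 ω ∂P) = 0 :=
  second_order_structure_mu1_one_proper_general P μ1 μ2 h1re h1 h2re horth Q hQmeas hprop Z1 Z2 hZ1
    hZ2
end

section
/- Circularity implies full rotational invariance of the law: let Q be a quaternion random variable on a probability space (Ω, P) such that for all unit quaternions u, v ∈ ℍ, the law of ω ↦ u·Q(ω)·v equals the law of Q. Then the law of Q is invariant under every rotation of ℝ⁴: for every ℝ-linear bijection f : ℍ → ℍ with |f(q)| = |q| for all q and determinant 1, the law of ω ↦ f(Q(ω)) equals the law of Q. -/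
open Quaternion MeasureTheory

/-!
By the Cartan–Dieudonné theorem every rotation of `ℍ ≅ ℝ⁴` is a product of reflections. The
reflection in the hyperplane orthogonal to a unit quaternion `a` is `q ↦ -a q̄ a`, so a product of
reflections has the form `q ↦ u q v` or `q ↦ u q̄ v` with `u, v` unit quaternions, the first form
occurring exactly when the determinant is `1`. The law of `Q` is invariant under `q ↦ u q v` by
hypothesis.
-/

namespace Quaternion

open Submodule

def IsUnitSandwich (f : ℍ[ℝ] → ℍ[ℝ]) : Prop :=
  ∃ u v : ℍ[ℝ], ‖u‖ = 1 ∧ ‖v‖ = 1 ∧ ∀ q, f q = u * q * v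

def IsUnitStarSandwich (f : ℍ[ℝ] → ℍ[ℝ]) : Prop :=
  ∃ u v : ℍ[ℝ], ‖u‖ = 1 ∧ ‖v‖ = 1 ∧ ∀ q, f q = u * star q * v

theorem isUnitSandwich_id : IsUnitSandwich id :=
  ⟨1, 1, norm_one, norm_one, fun q => by simp⟩

theorem IsUnitStarSandwich.comp_isUnitSandwich {f g : ℍ[ℝ] → ℍ[ℝ]} (hf : IsUnitStarSandwich f)
    (hg : IsUnitSandwich g) : IsUnitStarSandwich (f ∘ g) := by
  obtain ⟨u, v, hu, hv, hf⟩ := hf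
  obtain ⟨u', v', hu', hv', hg⟩ := hg
  refine ⟨u * star v', star u' * v, ?_, ?_, fun q => ?_⟩
  · simp [hu, hv']
  · simp [hu', hv]
  · simp [hf, hg, mul_assoc]

theorem IsUnitStarSandwich.comp {f g : ℍ[ℝ] → ℍ[ℝ]} (hf : IsUnitStarSandwich f)
    (hg : IsUnitStarSandwich g) : IsUnitSandwich (f ∘ g) := by
  obtain ⟨u, v, hu, hv, hf⟩ := hf
  obtain ⟨u', v', hu', hv', hg⟩ := hg
  refine ⟨u * star v', star u' * v, ?_, ?_, fun q => ?_⟩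
  · simp [hu, hv']
  · simp [hu', hv]
  · simp [hf, hg, mul_assoc]

theorem mul_star_mul_self (a q : ℍ[ℝ]) :
    a * star q * a = (2 * inner ℝ a q) • a - normSq a • q := by
  ext <;> simp [inner_def, normSq_def'] <;> ring

theorem reflection_orthogonal_singleton_apply {a : ℍ[ℝ]} (ha : ‖a‖ = 1) (q : ℍ[ℝ]) :
    reflection (ℝ ∙ a)ᗮ q = -(a * star q * a) := by
  rw [reflection_orthogonal_apply, reflection_singleton_apply, mul_star_mul_self,
    normSq_eq_norm_mul_self, ha]
  module

theorem isUnitStarSandwich_reflection {a : ℍ[ℝ]} (ha : a ≠ 0) :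
    IsUnitStarSandwich (reflection (ℝ ∙ a)ᗮ) := by
  set b := ‖a‖⁻¹ • a
  have hb : ‖b‖ = 1 := by simp [b, norm_smul, norm_ne_zero_iff.2 ha]
  have hspan : (ℝ ∙ b) = ℝ ∙ a := span_singleton_smul_eq (by simpa using ha) a
  refine ⟨-b, b, by rw [norm_neg, hb], hb, fun q => ?_⟩
  simp only [← hspan, reflection_orthogonal_singleton_apply hb, neg_mul]

theorem det_reflection_orthogonal_singleton {a : ℍ[ℝ]} (ha : a ≠ 0) :
    LinearMap.det (reflection (ℝ ∙ a)ᗮ).toLinearMap = -1 := by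
  rw [det_reflection, orthogonal_orthogonal, finrank_span_singleton ha, pow_one]

theorem reflection_orthogonal_singleton_zero :
    reflection (ℝ ∙ (0 : ℍ[ℝ]))ᗮ = LinearIsometryEquiv.refl ℝ ℍ[ℝ] := by
  refine LinearIsometryEquiv.ext fun q => reflection_mem_subspace_eq_self ?_
  simp

def IsSignedSandwich (φ : ℍ[ℝ] ≃ₗᵢ[ℝ] ℍ[ℝ]) : Prop :=
  IsUnitSandwich φ ∧ LinearMap.det φ.toLinearMap = 1 ∨
    IsUnitStarSandwich φ ∧ LinearMap.det φ.toLinearMap = -1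

theorem isSignedSandwich_list_prod_reflection (l : List ℍ[ℝ]) :
    IsSignedSandwich (l.map fun a => reflection (ℝ ∙ a)ᗮ).prod := by
  induction l with
  | nil => exact Or.inl ⟨isUnitSandwich_id, LinearMap.det_id⟩
  | cons a l ih =>
    rw [List.map_cons, List.prod_cons]
    by_cases ha : a = 0
    · rw [ha, reflection_orthogonal_singleton_zero]
      exact ih
    have hdet_mul (ψ : ℍ[ℝ] ≃ₗᵢ[ℝ] ℍ[ℝ]) :
        LinearMap.det (reflection (ℝ ∙ a)ᗮ * ψ).toLinearMap = -LinearMap.det ψ.toLinearMap := by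
      rw [← neg_one_mul, ← det_reflection_orthogonal_singleton ha, ← LinearMap.det_comp]
      rfl
    rcases ih with ⟨hψ, hψdet⟩ | ⟨hψ, hψdet⟩
    · exact Or.inr ⟨(isUnitStarSandwich_reflection ha).comp_isUnitSandwich hψ, by
        rw [hdet_mul, hψdet]⟩
    · exact Or.inl ⟨(isUnitStarSandwich_reflection ha).comp hψ, by rw [hdet_mul, hψdet, neg_neg]⟩

theorem isUnitSandwich_of_det_eq_one (φ : ℍ[ℝ] ≃ₗᵢ[ℝ] ℍ[ℝ])
    (hφ : LinearMap.det φ.toLinearMap = 1) : IsUnitSandwich φ := by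
  obtain ⟨l, -, rfl⟩ := φ.reflections_generate_dim
  rcases isSignedSandwich_list_prod_reflection l with ⟨h, -⟩ | ⟨-, h⟩
  · exact h
  · norm_num [h] at hφ

end Quaternion

theorem circular_law_is_SO4_invariant_general
    {Ω : Type*} [MeasurableSpace Ω] (P : Measure Ω)
    (Q : Ω → ℍ[ℝ])
    (hcirc : ∀ u v : ℍ[ℝ], ‖u‖ = 1 → ‖v‖ = 1 →
      Measure.map (fun ω => u * Q ω * v) P = Measure.map Q P) :
    ∀ f : ℍ[ℝ] →ₗ[ℝ] ℍ[ℝ], Function.Bijective f → (∀ q : ℍ[ℝ], ‖f q‖ = ‖q‖) →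
      LinearMap.det f = 1 →
      Measure.map (fun ω => f (Q ω)) P = Measure.map Q P := by
  intro f hbij hiso hdet
  obtain ⟨u, v, hu, hv, hf⟩ :=
    Quaternion.isUnitSandwich_of_det_eq_one ⟨LinearEquiv.ofBijective f hbij, hiso⟩ hdet
  have hfQ : (fun ω => f (Q ω)) = fun ω => u * Q ω * v := funext fun ω => hf (Q ω)
  rw [hfQ]
  exact hcirc u v hu hv

/-- Circularity implies full rotational invariance of the law: if the law of `Q` is
invariant under `q ↦ u·q·v` for all unit quaternions `u, v`, then it is invariant
under every rotation of `ℝ⁴ ≅ ℍ`, i.e. every ℝ-linear bijective isometry of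
determinant `1`. -/
theorem circular_law_is_SO4_invariant
    {Ω : Type*} [MeasurableSpace Ω] (P : Measure Ω) [IsProbabilityMeasure P]
    (Q : Ω → ℍ[ℝ]) (hQmeas : Measurable Q)
    (hcirc : ∀ u v : ℍ[ℝ], ‖u‖ = 1 → ‖v‖ = 1 →
      Measure.map (fun ω => u * Q ω * v) P = Measure.map Q P) :
    ∀ f : ℍ[ℝ] →ₗ[ℝ] ℍ[ℝ], Function.Bijective f → (∀ q : ℍ[ℝ], ‖f q‖ = ‖q‖) →
      LinearMap.det f = 1 →
      Measure.map (fun ω => f (Q ω)) P = Measure.map Q P :=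
  circular_law_is_SO4_invariant_general P Q hcirc
end
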